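/- For any integer n ≥ 2 and any integer t ≥ 2n, there exists a Markov chain with a state space S of size n and two states x, y ∈ S such that P_x(τ(y) = t) ≥ n/(8t). -/

import Mathlib

open Finset

/-- A (row-)stochastic transition matrix: the transition kernel of a Markov chain
on the finite state space `S`. -/
def IsStochastic {S : Type*} [Fintype S] (p : Matrix S S ℝ) : Prop :=
  (∀ a b, 0 ≤ p a b) ∧ ∀ a, ∑ b, p a b = 1

/-- The probability weight of a finite trajectory `z 0, z 1, …, z m` of the chain. -/
noncomputable def pathWeight {S : Type*} (p : Matrix S S ℝ) {m : ℕ} (z : Fin (m + 1) → S) : ℝ :=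
  ∏ i : Fin m, p (z i.castSucc) (z i.succ)

open scoped Classical in
/-- `P_x(A)` for an event `A` depending on the trajectory `X_0, X_1, …, X_m`
of the chain started at `x`. -/
noncomputable def eventProb {S : Type*} [Fintype S] (p : Matrix S S ℝ) (x : S) (m : ℕ)
    (A : (Fin (m + 1) → S) → Prop) : ℝ :=
  ∑ z : Fin (m + 1) → S, if z 0 = x ∧ A z then pathWeight p z else 0

/-- `P_x(τ(y) = t)`: the probability that the chain started at `x` first visits `y`
exactly at time `t`. -/
noncomputable def hitProbEq {S : Type*} [Fintype S] (p : Matrix S S ℝ) (x y : S) (t : ℕ) : ℝ :=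
  eventProb p x t fun z => z (Fin.last t) = y ∧ ∀ i : Fin (t + 1), (i : ℕ) < t → z i ≠ y

/-!
Run a cycle of length `n - 1` deterministically and let one of its states leak into an absorbing
state `y` with probability `β`. With `k = ⌊(t - 1)/(n - 1)⌋`, starting at the right cycle state,
the chain hits `y` exactly at time `t` if it passes the leaking state `k` times and leaks on the
next visit; this has probability `β (1 - β)^k`. For `β = 1/(2k)` Bernoulli's inequality bounds it
below by `1/(4k)`, and `n k ≤ 2t`.
-/

section PathBounds

variable {S : Type*} {p : Matrix S S ℝ}

lemma pathWeight_nonneg (hp : ∀ a b, 0 ≤ p a b) {m : ℕ} (z : Fin (m + 1) → S) :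
    0 ≤ pathWeight p z :=
  Finset.prod_nonneg fun _ _ => hp _ _

lemma pathWeight_le_eventProb [Fintype S] (hp : ∀ a b, 0 ≤ p a b) {m : ℕ}
    {A : (Fin (m + 1) → S) → Prop} (z : Fin (m + 1) → S) (hz : A z) :
    pathWeight p z ≤ eventProb p (z 0) m A := by
  rw [eventProb]
  refine le_trans (le_of_eq ?_) (Finset.single_le_sum (fun w _ => ?_) (mem_univ z))
  · rw [if_pos ⟨rfl, hz⟩]
  · split_ifs
    exacts [pathWeight_nonneg hp w, le_rfl]

/-- `u d` is the position `d` steps before time `t`. -/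
lemma pathWeight_countdown (u : ℕ → S) (t : ℕ) :
    pathWeight p (fun k : Fin (t + 1) => u (t - k)) = ∏ j ∈ range t, p (u (j + 1)) (u j) := by
  simp only [pathWeight, Fin.val_castSucc, Fin.val_succ]
  rw [Fin.prod_univ_eq_prod_range (fun i => p (u (t - i)) (u (t - (i + 1)))),
    ← Finset.prod_range_reflect]
  refine Finset.prod_congr rfl fun j hj => ?_
  rw [Finset.mem_range] at hj
  congr 2 <;> omega

lemma prod_countdown_le_hitProbEq [Fintype S] (hp : ∀ a b, 0 ≤ p a b) (u : ℕ → S) (t : ℕ)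
    (hu : ∀ j, 0 < j → j ≤ t → u j ≠ u 0) :
    ∏ j ∈ range t, p (u (j + 1)) (u j) ≤ hitProbEq p (u t) (u 0) t := by
  rw [← pathWeight_countdown]
  exact pathWeight_le_eventProb hp _ ⟨by simp, fun i hi => hu _ (by omega) (by omega)⟩

end PathBounds

section LeakyCycle

open Fin.NatCast

variable {m : ℕ} [NeZero m]

/-- States `(i : Fin m).castSucc` form a cycle run backwards, `i ↦ i - 1`; from state `i` the
chain leaks with probability `q i` into the absorbing state `Fin.last m`. -/
noncomputable def leakyCycle (q : Fin m → ℝ) : Matrix (Fin (m + 1)) (Fin (m + 1)) ℝ :=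
  Fin.lastCases (Pi.single (Fin.last m) 1) fun i =>
    q i • Pi.single (Fin.last m) 1 + (1 - q i) • Pi.single (i - 1).castSucc 1

lemma isStochastic_leakyCycle {q : Fin m → ℝ} (hq₀ : ∀ i, 0 ≤ q i) (hq₁ : ∀ i, q i ≤ 1) :
    IsStochastic (leakyCycle q) := by
  refine ⟨fun a b => ?_, fun a => ?_⟩
  · induction a using Fin.lastCases with
    | last => simp only [leakyCycle, Fin.lastCases_last, Pi.single_apply]; split_ifs <;> norm_num
    | cast i =>
      have := hq₀ i; have := hq₁ i
      simp only [leakyCycle, Fin.lastCases_castSucc, Pi.add_apply, Pi.smul_apply, smul_eq_mul,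
        Pi.single_apply]
      split_ifs <;> nlinarith
  · induction a using Fin.lastCases with
    | last => simp [leakyCycle]
    | cast i => simp [leakyCycle, Finset.sum_add_distrib, ← Finset.mul_sum]

lemma isStochastic_leakyCycle_single {β : ℝ} (hβ₀ : 0 ≤ β) (hβ₁ : β ≤ 1) :
    IsStochastic (leakyCycle (Pi.single 0 β : Fin m → ℝ)) :=
  isStochastic_leakyCycle (fun i => by rw [Pi.single_apply]; split_ifs <;> simp [hβ₀])
    (fun i => by rw [Pi.single_apply]; split_ifs <;> simp [hβ₁])

lemma leakyCycle_castSucc_last (q : Fin m → ℝ) (i : Fin m) :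
    leakyCycle q i.castSucc (Fin.last m) = q i := by
  simp [leakyCycle, (Fin.castSucc_lt_last _).ne]

lemma leakyCycle_castSucc_castSucc_sub_one (q : Fin m → ℝ) (i : Fin m) :
    leakyCycle q i.castSucc (i - 1).castSucc = 1 - q i := by
  simp [leakyCycle]

variable (m) in
/-- A trajectory of `leakyCycle`, indexed by the number of steps left until absorption. -/
def leakyCycleCountdown : ℕ → Fin (m + 1)
  | 0 => Fin.last m
  | j + 1 => (j : Fin m).castSucc

lemma prod_leakyCycle_countdown (q : Fin m → ℝ) (s : ℕ) :
    ∏ j ∈ range (s + 1), leakyCycle q (leakyCycleCountdown m (j + 1)) (leakyCycleCountdown m j) =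
      q 0 * ∏ j ∈ range s, (1 - q ((j + 1 : ℕ) : Fin m)) := by
  rw [Finset.prod_range_succ', mul_comm]
  congr 1
  · exact leakyCycle_castSucc_last q _
  · refine Finset.prod_congr rfl fun j _ => ?_
    have : ((j + 1 : ℕ) : Fin m) - 1 = j := by rw [Nat.cast_succ, add_sub_cancel_right]
    simp only [leakyCycleCountdown]
    rw [← this, leakyCycle_castSucc_castSucc_sub_one]

lemma prod_one_sub_single_zero_natCast_succ (β : ℝ) (s : ℕ) :
    ∏ j ∈ range s, (1 - (Pi.single 0 β : Fin m → ℝ) (j + 1 : ℕ)) = (1 - β) ^ (s / m) := by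
  simp only [Pi.single_apply, Fin.natCast_eq_zero, apply_ite (HSub.hSub (1 : ℝ)), sub_zero]
  rw [Finset.prod_ite, Finset.prod_const, Finset.prod_const_one, mul_one, Nat.card_multiples]

end LeakyCycle

lemma half_le_one_sub_inv_two_mul_pow (k : ℕ) : 1 / 2 ≤ (1 - (2 * k : ℝ)⁻¹) ^ k := by
  rcases Nat.eq_zero_or_pos k with rfl | hk
  · norm_num
  have hk' : (1 : ℝ) ≤ k := by exact_mod_cast hk
  calc (1 / 2 : ℝ) = 1 + k * -(2 * k : ℝ)⁻¹ := by field_simp; ring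
    _ ≤ (1 - (2 * k : ℝ)⁻¹) ^ k := by
      rw [sub_eq_add_neg (1 : ℝ)]
      refine one_add_mul_le_pow (neg_le_neg ?_) k
      exact (inv_le_one_of_one_le₀ (by linarith)).trans one_le_two

/-- Claim 15: for `n ≥ 2` and `t ≥ 2n` there is a Markov chain on `n` states and
states `x, y` with `P_x(τ(y) = t) ≥ n/(8t)`. -/
theorem exists_chain_large_hitProbEq (n t : ℕ) (hn : 2 ≤ n) (ht : 2 * n ≤ t) :
    ∃ p : Matrix (Fin n) (Fin n) ℝ, IsStochastic p ∧
      ∃ x y : Fin n, (n : ℝ) / (8 * t) ≤ hitProbEq p x y t := by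
  obtain ⟨m, rfl⟩ : ∃ m, n = m + 1 := ⟨n - 1, by omega⟩
  obtain ⟨s, rfl⟩ : ∃ s, t = s + 1 := ⟨t - 1, by omega⟩
  have : NeZero m := ⟨by omega⟩
  set k := s / m
  have hk : 1 ≤ k := (Nat.one_le_div_iff (by omega)).2 (by omega)
  have hsize : (m + 1) * k ≤ 2 * (s + 1) := by
    have : k * m ≤ s := Nat.div_mul_le_self s m
    have : k ≤ s := Nat.div_le_self s m
    linarith
  set β : ℝ := (2 * k)⁻¹
  have hβ₀ : 0 ≤ β := by positivity
  have hβ₁ : β ≤ 1 := inv_le_one_of_one_le₀ (by norm_cast; omega)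
  have hp := isStochastic_leakyCycle_single (m := m) hβ₀ hβ₁
  refine ⟨_, hp, leakyCycleCountdown m (s + 1), Fin.last m, ?_⟩
  calc ((m + 1 : ℕ) : ℝ) / (8 * (s + 1 : ℕ)) ≤ (4 * k : ℝ)⁻¹ := by
        rw [← one_div, div_le_div_iff₀ (by positivity) (by positivity)]
        exact_mod_cast (by linarith : (m + 1) * (4 * k) ≤ 1 * (8 * (s + 1)))
    _ = β * (1 / 2) := by ring
    _ ≤ β * (1 - β) ^ k := mul_le_mul_of_nonneg_left (half_le_one_sub_inv_two_mul_pow k) hβ₀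
    _ = ∏ j ∈ range (s + 1),
          leakyCycle _ (leakyCycleCountdown m (j + 1)) (leakyCycleCountdown m j) := by
        rw [prod_leakyCycle_countdown, prod_one_sub_single_zero_natCast_succ, Pi.single_eq_same]
    _ ≤ _ := prod_countdown_le_hitProbEq hp.1 _ _ fun j hj _ => by
        obtain ⟨j, rfl⟩ := Nat.exists_eq_add_of_lt hj
        exact (Fin.castSucc_lt_last _).ne
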